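/- arXiv:1903.12276 — 5 statements merged into one kernel-verified Lean document; each statement's English description precedes it below -/
import Mathlib

section
/- Let σ be an aperiodic homeomorphism of a Cantor set X (with a fixed compatible metric d). Then σ is chain transitive if and only if σ is moving, i.e., for every clopen set E with ∅ ≠ E ≠ X one has σ(E) \ E ≠ ∅ and E \ σ(E) ≠ ∅. -/
/-- A nonempty closed invariant set which is minimal among such sets. -/
def IsMinimalSet {X : Type*} [TopologicalSpace X] (σ : X ≃ₜ X) (Y : Set X) : Prop :=
  Y.Nonempty ∧ IsClosed Y ∧ σ '' Y = Y ∧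
    ∀ Z : Set X, Z ⊆ Y → Z.Nonempty → IsClosed Z → σ '' Z = Z → Z = Y

/-- An `ε`-chain from `x` to `y`: a finite sequence `x = c 0, c 1, ..., c n = y`
(of length `n ≥ 1`) with `dist (σ (c i)) (c (i+1)) < ε` for all `i < n`. -/
def EpsChain {X : Type*} [MetricSpace X] (σ : X ≃ₜ X) (ε : ℝ) (x y : X) : Prop :=
  ∃ n : ℕ, 1 ≤ n ∧ ∃ c : ℕ → X, c 0 = x ∧ c n = y ∧
    ∀ i < n, dist (σ (c i)) (c (i + 1)) < ε

/-- `σ` is chain transitive if for any two points and any `ε > 0` there is an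
`ε`-chain from one to the other. -/
def ChainTransitive {X : Type*} [MetricSpace X] (σ : X ≃ₜ X) : Prop :=
  ∀ x y : X, ∀ ε : ℝ, 0 < ε → EpsChain σ ε x y

/-- `σ` is aperiodic: no periodic points. -/
def Aperiodic {X : Type*} [TopologicalSpace X] (σ : X ≃ₜ X) : Prop :=
  ∀ x : X, ∀ n : ℤ, n ≠ 0 → (σ.toEquiv ^ n) x ≠ x

/-- `σ` is moving: every nontrivial clopen set is moved by `σ` in both directions. -/
def Moving {X : Type*} [TopologicalSpace X] (σ : X ≃ₜ X) : Prop :=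
  ∀ E : Set X, IsClopen E → E.Nonempty → E ≠ Set.univ →
    (σ '' E \ E).Nonempty ∧ (E \ σ '' E).Nonempty

/-- Appending one step to a chain. -/
lemma epsChain_snoc {X : Type*} [MetricSpace X] (σ : X ≃ₜ X) {ε : ℝ} {x z w : X}
    (h : EpsChain σ ε x z) (hw : dist (σ z) w < ε) : EpsChain σ ε x w := by
  obtain ⟨n, hn, c, hc0, hcn, hstep⟩ := h
  refine ⟨n + 1, by omega, fun i => if i = n + 1 then w else c i,
    by simp only [if_neg (by omega : (0:ℕ) ≠ n + 1)]; exact hc0, by simp, ?_⟩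
  intro i hi
  rcases Nat.lt_or_ge i n with h' | h'
  · simp only [if_neg (by omega : i ≠ n + 1), if_neg (by omega : i + 1 ≠ n + 1)]
    exact hstep i h'
  · have e : i = n := by omega
    simp only [if_neg (by omega : i ≠ n + 1), if_pos (by omega : i + 1 = n + 1), e, hcn]
    simpa using hw

/-- Wiggling the endpoint of a chain. -/
lemma epsChain_wiggle {X : Type*} [MetricSpace X] (σ : X ≃ₜ X) {ε δ : ℝ} {x z z' : X}
    (h : EpsChain σ ε x z) (hz : dist z z' < δ) : EpsChain σ (ε + δ) x z' := by
  obtain ⟨n, hn, c, hc0, hcn, hstep⟩ := h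
  refine ⟨n, hn, fun i => if i = n then z' else c i, by
    simp [Nat.one_le_iff_ne_zero.mp hn |>.symm, hc0], by simp, ?_⟩
  intro i hi
  rcases Nat.lt_or_ge (i + 1) n with h' | h'
  · simp only [if_neg (by omega : i ≠ n), if_neg (by omega : i + 1 ≠ n)]
    have := hstep i hi
    linarith [dist_nonneg (x := z) (y := z'), this]
  · have : i + 1 = n := by omega
    simp only [if_neg (by omega : i ≠ n), if_pos this]
    calc dist (σ (c i)) z' ≤ dist (σ (c i)) (c (i+1)) + dist (c (i+1)) z' := dist_triangle _ _ _
      _ < ε + δ := by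
          have h1 := hstep i hi
          have hz1 : c (i+1) = z := by rw [this, hcn]
          rw [hz1] at h1 ⊢
          linarith

lemma epsChain_mono {X : Type*} [MetricSpace X] (σ : X ≃ₜ X) {ε ε' : ℝ} {x y : X}
    (hle : ε ≤ ε') (h : EpsChain σ ε x y) : EpsChain σ ε' x y := by
  obtain ⟨n, hn, c, hc0, hcn, hstep⟩ := h
  exact ⟨n, hn, c, hc0, hcn, fun i hi => lt_of_lt_of_le (hstep i hi) hle⟩

/-- A clopen forward-invariant trap blocks chain transitivity. -/
lemma trap {X : Type*} [MetricSpace X] [CompactSpace X] (σ : X ≃ₜ X) {F : Set X}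
    (hF : IsClopen F) (hinv : σ '' F ⊆ F) {x y : X} (hx : x ∈ F) (hy : y ∉ F)
    (hct : ChainTransitive σ) : False := by
  have hcomp : IsCompact (σ '' F) := (σ.isClosedMap F hF.1).isCompact
  obtain ⟨δ, hδ, hth⟩ := hcomp.exists_thickening_subset_open hF.2 hinv
  obtain ⟨n, hn, c, hc0, hcn, hstep⟩ := hct x y δ hδ
  have key : ∀ i ≤ n, c i ∈ F := by
    intro i
    induction i with
    | zero => intro _; rwa [hc0]
    | succ k ih =>
      intro hk
      have hkF : c k ∈ F := ih (by omega)
      have : c (k+1) ∈ Metric.thickening δ (σ '' F) := by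
        rw [Metric.mem_thickening_iff]
        exact ⟨σ (c k), Set.mem_image_of_mem _ hkF, by
          rw [dist_comm]; exact hstep k (by omega)⟩
      exact hth this
  exact hy (hcn ▸ key n le_rfl)

/-- Clopen sandwich: compact inside open, in a compact totally disconnected space. -/
lemma sandwich {X : Type*} [MetricSpace X] [CompactSpace X] [TotallyDisconnectedSpace X]
    {F U : Set X} (hF : IsCompact F) (hU : IsOpen U) (hFU : F ⊆ U) :
    ∃ E : Set X, IsClopen E ∧ F ⊆ E ∧ E ⊆ U := by
  choose V hV hxV hVU using fun z : F => compact_exists_isClopen_in_isOpen hU (hFU z.2)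
  obtain ⟨t, ht⟩ := hF.elim_finite_subcover (fun z : F => V z) (fun z => (hV z).2)
    (fun z hz => Set.mem_iUnion.2 ⟨⟨z, hz⟩, hxV _⟩)
  refine ⟨⋃ z ∈ t, V z, ?_, ht, Set.iUnion₂_subset fun z _ => hVU z⟩
  exact Set.Finite.isClopen_biUnion t.finite_toSet fun z _ => hV z

theorem stmt9 {X : Type*} [MetricSpace X] [CompactSpace X] [TotallyDisconnectedSpace X]
    (hperf : Perfect (Set.univ : Set X))
    (σ : X ≃ₜ X) (hap : Aperiodic σ) :
    ChainTransitive σ ↔ Moving σ := by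
  constructor
  · intro hct E hE hne hneq
    constructor
    · -- σ '' E \ E nonempty
      by_contra h
      rw [Set.not_nonempty_iff_eq_empty, Set.diff_eq_empty] at h
      obtain ⟨y, hy⟩ : Eᶜ.Nonempty := by
        rw [Set.nonempty_compl]; exact hneq
      exact trap σ hE h hne.choose_spec hy hct
    · -- E \ σ '' E nonempty
      by_contra h
      rw [Set.not_nonempty_iff_eq_empty, Set.diff_eq_empty] at h
      -- E ⊆ σ '' E ⇒ σ '' Eᶜ ⊆ Eᶜ
      have hinv : σ '' Eᶜ ⊆ Eᶜ := by
        rintro _ ⟨z, hz, rfl⟩ hmem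
        obtain ⟨w, hw, hww⟩ := h hmem
        exact hz (σ.injective hww ▸ hw)
      obtain ⟨y, hy⟩ : Eᶜ.Nonempty := by rw [Set.nonempty_compl]; exact hneq
      have : hne.choose ∉ Eᶜ := fun hc => hc hne.choose_spec
      exact trap σ hE.compl hinv hy this hct
  · intro hmov x y ε hε
    set Ω : Set X := {w | EpsChain σ (ε/2) x w} with hΩdef
    have hΩne : (σ x) ∈ Ω := ⟨1, le_rfl, fun i => if i = 0 then x else σ x, by simp, by simp,
      by intro i hi; interval_cases i; simpa using half_pos hε⟩
    -- closure Ω ⊆ Ω_ε gives the conclusion if y ∈ closure Ω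
    by_cases hyF : y ∈ closure Ω
    · rw [Metric.mem_closure_iff] at hyF
      obtain ⟨z, hz, hd⟩ := hyF (ε/2) (by linarith)
      have := epsChain_wiggle σ hz (by rw [dist_comm]; exact hd)
      exact epsChain_mono σ (by linarith) this
    · exfalso
      set F := closure Ω with hFdef
      -- every (ε/2)-step from a point of F lands in Ω
      have hstep : ∀ z ∈ F, ∀ w, dist (σ z) w < ε/2 → w ∈ Ω := by
        intro z hz w hw
        have hopen : IsOpen (σ ⁻¹' (Metric.ball w (ε/2))) :=
          Metric.isOpen_ball.preimage σ.continuous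
        have hzmem : z ∈ σ ⁻¹' (Metric.ball w (ε/2)) := by
          simpa [Metric.mem_ball, dist_comm] using hw
        obtain ⟨z', hz'Ω, hz'⟩ := _root_.mem_closure_iff.1 hz _ hopen hzmem
        exact epsChain_snoc σ hz' (by simpa [Metric.mem_ball, dist_comm] using hz'Ω)
      -- the open set U
      set U : Set X := σ ⁻¹' (⋃ z ∈ F, Metric.ball (σ z) (ε/2)) with hUdef
      have hUopen : IsOpen U :=
        (isOpen_biUnion fun z _ => Metric.isOpen_ball).preimage σ.continuous
      have hFU : F ⊆ U := fun z hz => by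
        simp only [hUdef, Set.mem_preimage, Set.mem_iUnion]
        exact ⟨z, hz, by simp [Metric.mem_ball]; linarith⟩
      have hUF : ∀ z ∈ U, σ z ∈ F := by
        intro z hz
        simp only [hUdef, Set.mem_preimage, Set.mem_iUnion] at hz
        obtain ⟨z', hz', hb⟩ := hz
        exact subset_closure (hstep z' hz' (σ z) (by rwa [Metric.mem_ball, dist_comm] at hb))
      -- avoid y
      have hFy : F ⊆ U ∩ {y}ᶜ := fun z hz => ⟨hFU hz, fun h => hyF (h ▸ hz)⟩
      obtain ⟨E, hEclopen, hFE, hEU⟩ := sandwich (isClosed_closure.isCompact)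
        (hUopen.inter (isOpen_compl_singleton)) hFy
      have hEinv : σ '' E ⊆ E := by
        rintro _ ⟨z, hz, rfl⟩
        exact hFE (hUF z (hEU hz).1)
      have hEne : E.Nonempty := ⟨σ x, hFE (subset_closure hΩne)⟩
      have hEneq : E ≠ Set.univ := fun h => (hEU (h ▸ Set.mem_univ y)).2 rfl
      obtain ⟨⟨w, hw1, hw2⟩, -⟩ := hmov E hEclopen hEne hEneq
      exact hw2 (hEinv hw1)
end

section
/- Let (Ω, d) be a compact metric space and σ : Ω → Ω a homeomorphism that is a uniform limit of minimal homeomorphisms, i.e., there exist minimal homeomorphisms f_i with sup_{x} d(σ(x), f_i(x)) → 0. Then σ is chain transitive. -/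
/-!
Approximate `σ` uniformly within `ε / 2` by a minimal homeomorphism `g`. On a compact space the
ω-limit set of a `g`-orbit is nonempty, closed and invariant under `g` and `g⁻¹`, hence contains a
dense orbit and is everything: every forward `g`-orbit comes arbitrarily close to every point.
Following the `g`-orbit of `x` until it is `ε / 2`-close to `y` and then jumping to `y` is an
`ε`-chain for `σ`.
-/

open Filter Set omegaLimit

section ForwardOrbit

variable {X : Type*} [TopologicalSpace X]

theorem mapClusterPt_atTop_nat_succ_iff {y : X} {u : ℕ → X} :
    MapClusterPt y atTop (fun n ↦ u (n + 1)) ↔ MapClusterPt y atTop u := by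
  rw [← Function.comp_def, mapClusterPt_comp, map_add_atTop_eq_nat]

theorem Continuous.mapsTo_omegaLimit_iterate {f : X → X} (hf : Continuous f) (x : X) :
    MapsTo f (ω⁺ (fun n ↦ f^[n]) {x}) (ω⁺ (fun n ↦ f^[n]) {x}) := fun y hy ↦ by
  rw [mem_omegaLimit_singleton_iff_mapClusterPt] at hy ⊢
  rw [← mapClusterPt_atTop_nat_succ_iff]
  simpa only [Function.comp_def, Function.iterate_succ_apply'] using
    hy.continuousAt_comp hf.continuousAt

theorem Homeomorph.mapsTo_symm_omegaLimit_iterate (f : X ≃ₜ X) (x : X) :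
    MapsTo f.symm (ω⁺ (fun n ↦ f^[n]) {x}) (ω⁺ (fun n ↦ f^[n]) {x}) := fun y hy ↦ by
  rw [mem_omegaLimit_singleton_iff_mapClusterPt, ← mapClusterPt_atTop_nat_succ_iff] at hy
  rw [mem_omegaLimit_singleton_iff_mapClusterPt]
  simpa only [Function.comp_def, Function.iterate_succ_apply', Homeomorph.symm_apply_apply]
    using hy.continuousAt_comp f.symm.continuous.continuousAt

theorem Homeomorph.eq_univ_of_mapsTo_of_dense_zpow_orbit (f : X ≃ₜ X)
    (hmin : ∀ x, Dense {y | ∃ n : ℤ, (f.toEquiv ^ n) x = y}) {K : Set X} (hK : IsClosed K)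
    (hne : K.Nonempty) (hf : MapsTo f K K) (hf_symm : MapsTo f.symm K K) : K = univ := by
  obtain ⟨z, hz⟩ := hne
  have horbit : ∀ n : ℤ, (f.toEquiv ^ n) z ∈ K := by
    intro n
    induction n using Int.induction_on with
    | zero => exact hz
    | succ k ih => rw [add_comm, zpow_add, zpow_one, Equiv.Perm.mul_apply]; exact hf ih
    | pred k ih =>
      rw [sub_eq_neg_add, zpow_add, zpow_neg_one, Equiv.Perm.mul_apply]; exact hf_symm ih
  rw [← hK.closure_eq]
  exact ((hmin z).mono (by rintro _ ⟨n, rfl⟩; exact horbit n)).closure_eq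

theorem Homeomorph.mapClusterPt_iterate_of_dense_zpow_orbit [CompactSpace X] (f : X ≃ₜ X)
    (hmin : ∀ x, Dense {y | ∃ n : ℤ, (f.toEquiv ^ n) x = y}) (x y : X) :
    MapClusterPt y atTop (fun n ↦ f^[n] x) := by
  rw [← mem_omegaLimit_singleton_iff_mapClusterPt,
    f.eq_univ_of_mapsTo_of_dense_zpow_orbit hmin (isClosed_omegaLimit _ _ _)
      (nonempty_omegaLimit _ _ _ (singleton_nonempty x))
      (f.continuous.mapsTo_omegaLimit_iterate x) (f.mapsTo_symm_omegaLimit_iterate x)]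
  trivial

end ForwardOrbit

theorem epsChain_of_dist_iterate_lt {X : Type*} [MetricSpace X] {σ : X ≃ₜ X} {g : X → X}
    {ε : ℝ} (hσg : ∀ z, dist (σ z) (g z) < ε / 2) {x y : X} {n : ℕ}
    (hy : dist (g^[n + 1] x) y < ε / 2) : EpsChain σ ε x y := by
  refine ⟨n + 1, Nat.le_add_left 1 n, Function.update (fun k ↦ g^[k] x) (n + 1) y,
    by simp, by simp, fun i hi ↦ ?_⟩
  have hstep := hσg (g^[i] x)
  rw [Function.update_of_ne (by omega)]
  rcases (Nat.lt_succ_iff.1 hi).lt_or_eq with hlt | rfl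
  · rw [Function.update_of_ne (by omega), Function.iterate_succ_apply']
    linarith [dist_nonneg (x := σ (g^[i] x)) (y := g (g^[i] x))]
  · rw [Function.update_self]
    calc dist (σ (g^[i] x)) y ≤ dist (σ (g^[i] x)) (g (g^[i] x)) + dist (g^[i + 1] x) y := by
          rw [Function.iterate_succ_apply']; exact dist_triangle _ _ _
      _ < ε := by linarith

theorem stmt10 {Ω : Type*} [MetricSpace Ω] [CompactSpace Ω]
    (σ : Ω ≃ₜ Ω) (f : ℕ → (Ω ≃ₜ Ω))
    (hmin : ∀ i : ℕ, ∀ x : Ω, Dense {y : Ω | ∃ n : ℤ, ((f i).toEquiv ^ n) x = y})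
    (hconv : ∀ ε : ℝ, 0 < ε → ∃ N : ℕ, ∀ i ≥ N, ∀ x : Ω, dist (σ x) ((f i) x) < ε) :
    ChainTransitive σ := by
  intro x y ε hε
  obtain ⟨N, hN⟩ := hconv (ε / 2) (half_pos hε)
  obtain ⟨n, hn⟩ := (mapClusterPt_atTop_nat_succ_iff.2
    ((f N).mapClusterPt_iterate_of_dense_zpow_orbit (hmin N) x y)).frequently
      (Metric.ball_mem_nhds y (half_pos hε)) |>.exists
  exact epsChain_of_dist_iterate_lt (hN N le_rfl) hn
end

section
/- Suppose σ is an aperiodic homeomorphism of a Cantor set X with a unique minimal set Z. Then σ is chain transitive: for any x, y ∈ X and any ε > 0 there is an ε-chain from x to y. -/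
/-!
The closure of a nonempty forward-invariant set is closed and invariant, so by Zorn and compactness
it contains a minimal set, which must be `Z`. The points reachable from `x` by `ε`-chains form
such a set, and so does its image under `σ`; hence every point of `Z` is within `ε` of the image of
a reachable point, and is therefore reachable itself. Applying the same reasoning to `σ⁻¹`, every
point of `Z` has an `ε`-chain to `y`, and the two chains concatenate through any point of `Z`.
-/

open Set

section MinimalSet

variable {X : Type*} [TopologicalSpace X]

theorem isMinimalSet_symm_iff (σ : X ≃ₜ X) (W : Set X) :
    IsMinimalSet σ.symm W ↔ IsMinimalSet σ W := by
  have key : ∀ V : Set X, σ.symm '' V = V ↔ σ '' V = V := fun V => by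
    constructor <;> intro h <;> conv_lhs => rw [← h]
    all_goals simp [image_image]
  simp only [IsMinimalSet, key]

theorem exists_isMinimalSet_subset [CompactSpace X] (σ : X ≃ₜ X) {K : Set X} (hne : K.Nonempty)
    (hK : IsClosed K) (hσK : σ '' K ⊆ K) : ∃ W ⊆ K, IsMinimalSet σ W := by
  let S : Set (Set X) := {W | W.Nonempty ∧ IsClosed W ∧ σ '' W ⊆ W}
  have hchain : ∀ c ⊆ S, IsChain (· ⊆ ·) c → c.Nonempty → ∃ lb ∈ S, ∀ W ∈ c, lb ⊆ W := by
    intro c hcS hc hcne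
    have : Nonempty c := hcne.to_subtype
    refine ⟨⋂₀ c, ⟨?_, isClosed_sInter fun W hW => (hcS hW).2.1, ?_⟩,
      fun W hW => sInter_subset_of_mem hW⟩
    · have hc' : IsChain (· ⊇ ·) c := hc.symm
      exact IsCompact.nonempty_sInter_of_directed_nonempty_isCompact_isClosed hc'.directedOn
        (fun W hW => (hcS hW).1) (fun W hW => (hcS hW).2.1.isCompact) (fun W hW => (hcS hW).2.1)
    · exact subset_sInter fun W hW => (image_mono (sInter_subset_of_mem hW)).trans (hcS hW).2.2
  obtain ⟨W, hWK, hW⟩ := zorn_superset_nonempty S hchain K ⟨hne, hK, hσK⟩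
  obtain ⟨hWne, hWc, hσW⟩ := hW.prop
  have hmin : ∀ V ⊆ W, V.Nonempty → IsClosed V → σ '' V ⊆ V → V = W :=
    fun V hVW hVne hVc hσV => hVW.antisymm (hW.2 ⟨hVne, hVc, hσV⟩ hVW)
  have hσW_eq : σ '' W = W := hmin _ hσW (hWne.image σ) (σ.isClosedMap _ hWc) (image_mono hσW)
  exact ⟨W, hWK, hWne, hWc, hσW_eq, fun V hVW hVne hVc hσV => hmin V hVW hVne hVc hσV.le⟩

theorem subset_closure_of_forall_isMinimalSet_eq [CompactSpace X] (σ : X ≃ₜ X) {Z : Set X}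
    (huniq : ∀ W : Set X, IsMinimalSet σ W → W = Z) {S : Set X} (hne : S.Nonempty)
    (hσS : σ '' S ⊆ S) : Z ⊆ closure S := by
  have hσS' : σ '' closure S ⊆ closure S :=
    (image_closure_subset_closure_image σ.continuous).trans (closure_mono hσS)
  obtain ⟨W, hWS, hW⟩ := exists_isMinimalSet_subset σ hne.closure isClosed_closure hσS'
  exact huniq W hW ▸ hWS

end MinimalSet

section EpsChain

variable {X : Type*} [MetricSpace X] {σ : X ≃ₜ X} {ε : ℝ} {x y z : X}

theorem EpsChain.single (h : dist (σ x) y < ε) : EpsChain σ ε x y :=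
  ⟨1, le_rfl, fun i => if i = 0 then x else y, rfl, rfl, fun i hi => by
    obtain rfl : i = 0 := by omega
    simpa using h⟩

theorem EpsChain.trans (hxy : EpsChain σ ε x y) (hyz : EpsChain σ ε y z) : EpsChain σ ε x z := by
  obtain ⟨n, hn, c, hc0, hcn, hc⟩ := hxy
  obtain ⟨m, hm, d, hd0, hdm, hd⟩ := hyz
  let e : ℕ → X := fun i => if i ≤ n then c i else d (i - n)
  have he : ∀ i, n ≤ i → e i = d (i - n) := by
    intro i hi
    rcases hi.eq_or_lt with rfl | hlt
    · simp [e, hcn, hd0]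
    · simp [e, hlt.not_ge]
  refine ⟨n + m, by omega, e, by simp [e, hc0], by simp [he, hdm], fun i hi => ?_⟩
  rcases lt_or_ge i n with hin | hni
  · simpa [e, hin.le, Nat.succ_le_of_lt hin] using hc i hin
  · rw [he i hni, he (i + 1) (by omega), Nat.sub_add_comm hni]
    exact hd _ (by omega)

theorem EpsChain.of_self (σ : X ≃ₜ X) (hε : 0 < ε) (x : X) : EpsChain σ ε x (σ x) :=
  .single (by simpa using hε)

theorem EpsChain.of_symm (σ : X ≃ₜ X) (hε : 0 < ε) (x : X) : EpsChain σ ε (σ.symm x) x :=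
  .single (by simpa using hε)

variable [CompactSpace X] {Z : Set X}

theorem epsChain_to_mem (huniq : ∀ W : Set X, IsMinimalSet σ W → W = Z) (hε : 0 < ε)
    (x : X) (hz : z ∈ Z) : EpsChain σ ε x z := by
  let R : Set X := {w | EpsChain σ ε x w}
  have hσR : σ '' R ⊆ R := by
    rintro _ ⟨w, hw, rfl⟩
    exact hw.trans (.of_self σ hε w)
  have hne : (σ '' R).Nonempty := ⟨_, mem_image_of_mem σ (EpsChain.of_self σ hε x)⟩
  obtain ⟨_, ⟨w, hw, rfl⟩, hwz⟩ := Metric.mem_closure_iff.1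
    (subset_closure_of_forall_isMinimalSet_eq σ huniq hne (image_mono hσR) hz) ε hε
  exact EpsChain.trans hw (.single (by rwa [dist_comm]))

theorem epsChain_from_of_apply_mem (huniq : ∀ W : Set X, IsMinimalSet σ W → W = Z) (hε : 0 < ε)
    (y : X) (hz : σ z ∈ Z) : EpsChain σ ε z y := by
  let B : Set X := {w | EpsChain σ ε w y}
  have hσB : σ.symm '' B ⊆ B := by
    rintro _ ⟨w, hw, rfl⟩
    exact (EpsChain.of_symm σ hε w).trans hw
  have huniq' : ∀ W : Set X, IsMinimalSet σ.symm W → W = Z :=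
    fun W hW => huniq W ((isMinimalSet_symm_iff σ W).1 hW)
  obtain ⟨b, hb, hzb⟩ := Metric.mem_closure_iff.1
    (subset_closure_of_forall_isMinimalSet_eq σ.symm huniq' ⟨_, EpsChain.of_symm σ hε y⟩ hσB hz)
    ε hε
  exact EpsChain.trans (.single hzb) hb

end EpsChain

theorem stmt12_general {X : Type*} [MetricSpace X] [CompactSpace X]
    (σ : X ≃ₜ X)
    (Z : Set X) (hZ : IsMinimalSet σ Z) (huniq : ∀ W : Set X, IsMinimalSet σ W → W = Z) :
    ChainTransitive σ := by
  intro x y ε hε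
  obtain ⟨z, hz⟩ := hZ.1
  have hσz : σ z ∈ Z := hZ.2.2.1 ▸ mem_image_of_mem σ hz
  exact (epsChain_to_mem huniq hε x hz).trans (epsChain_from_of_apply_mem huniq hε y hσz)

theorem stmt12 {X : Type*} [MetricSpace X] [CompactSpace X] [TotallyDisconnectedSpace X]
    (hperf : Perfect (Set.univ : Set X))
    (σ : X ≃ₜ X) (hap : Aperiodic σ)
    (Z : Set X) (hZ : IsMinimalSet σ Z) (huniq : ∀ W : Set X, IsMinimalSet σ W → W = Z) :
    ChainTransitive σ :=
  stmt12_general σ Z hZ huniq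
end

section
/- The set of chain transitive homeomorphisms of a compact metric space X is closed in the topology of uniform convergence on the homeomorphism group: if σ_n → σ uniformly (together with inverses) and each σ_n is chain transitive, then σ is chain transitive. -/
theorem stmt14 {X : Type*} [MetricSpace X] [CompactSpace X]
    (σ : X ≃ₜ X) (σn : ℕ → X ≃ₜ X)
    (hct : ∀ n : ℕ, ChainTransitive (σn n))
    (hconv : ∀ ε : ℝ, 0 < ε → ∃ N : ℕ, ∀ n ≥ N, ∀ x : X,
      dist ((σn n) x) (σ x) < ε ∧ dist ((σn n).symm x) (σ.symm x) < ε) :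
    ChainTransitive σ := by
  intro x y ε hε
  obtain ⟨N, hN⟩ := hconv (ε / 2) (by linarith)
  obtain ⟨n, hn1, c, hc0, hcn, hchain⟩ := hct N x y (ε / 2) (by linarith)
  refine ⟨n, hn1, c, hc0, hcn, fun i hi => ?_⟩
  calc dist (σ (c i)) (c (i + 1))
      ≤ dist (σ (c i)) ((σn N) (c i)) + dist ((σn N) (c i)) (c (i + 1)) := dist_triangle _ _ _
    _ < ε / 2 + ε / 2 := by
        have := (hN N le_rfl (c i)).1
        rw [dist_comm] at this
        exact add_lt_add this (hchain i hi)
    _ = ε := by ring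
end

section
/- Let A be a C*-algebra with the property that it has an approximate unit of projections and cancellation of projections, and suppose: (i) every nonzero projection p ∈ A has [p]₀ ≠ 0 in K₀; (ii) A sits in a unital C*-algebra B such that for every isometry v ∈ B whose image in B/A is a unitary u, the index satisfies Ind(−[u]₁) = [1 − vv*]₀, and Ind(K₁(B/A)) ∩ K₀⁺(A) = {0}; (iii) B/A is finite (every isometry in B/A is a unitary). Then B is finite: every isometry v ∈ B is a unitary. (Abstract version: in an extension 0 → I → A → D → 0 with D stably finite, with [p]₀ ≠ 0 for every nonzero projection p ∈ I, and Ind(K₁(D)) ∩ K₀⁺(I) = {0}, the algebra A is finite.) -/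
/-- Abstract stable-finiteness criterion: in an extension `0 → I → A → D → 0` of
C*-algebras with `D` finite, `[p]₀ ≠ 0` for every nonzero projection `p ∈ I`, and
`Ind(K₁(D)) ∩ K₀⁺(I) = {0}`, the algebra `A` is finite (every isometry is a unitary).
The K-theory data is abstracted: `k0` is the `K₀`-class map on projections of `I`,
`k1` the `K₁`-class map on unitaries of `D`, and `Ind` the index map of the
extension. -/
theorem stmt17 {A D : Type*}
    [NormedRing A] [StarRing A] [CStarRing A]
    [NormedRing D] [StarRing D] [CStarRing D]
    (π : A →+* D) (hπstar : ∀ a : A, π (star a) = star (π a))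
    (I : TwoSidedIdeal A) (hker : ∀ a : A, π a = 0 ↔ a ∈ I)
    {K0I K1D : Type*} [AddCommGroup K0I] [AddCommGroup K1D]
    (k0 : A → K0I) (k1 : D → K1D) (Ind : K1D →+ K0I)
    (hproj : ∀ p : A, p ∈ I → p * p = p → star p = p → p ≠ 0 → k0 p ≠ 0)
    (hInd : ∀ v : A, star v * v = 1 → Ind (-(k1 (π v))) = k0 (1 - v * star v))
    (hpos : ∀ g : K1D, ∀ p : A, p ∈ I → p * p = p → star p = p →
      Ind g = k0 p → k0 p = 0)
    (hDfin : ∀ d : D, star d * d = 1 → d * star d = 1) :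
    ∀ v : A, star v * v = 1 → v * star v = 1 := by
  intro v hv
  set p := 1 - v * star v with hp
  have hmem : p ∈ I := by
    rw [← hker]
    have : star (π v) * π v = 1 := by
      rw [← hπstar, ← map_mul, hv, map_one]
    have h2 := hDfin (π v) this
    simp [hp, map_sub, map_mul, hπstar, h2]
  have hq : v * star v * (v * star v) = v * star v := by
    rw [mul_assoc, ← mul_assoc (star v) v (star v), hv, one_mul]
  have hidem : p * p = p := by
    simp only [hp, mul_sub, sub_mul, one_mul, mul_one, hq]
    abel
  have hsa : star p = p := by simp [hp, star_mul]
  have h := hInd v hv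
  rw [← hp] at h
  have hz : k0 p = 0 := hpos _ p hmem hidem hsa h
  by_contra hne
  have hpne : p ≠ 0 := by
    simp only [hp, sub_ne_zero]
    exact fun h => hne h.symm
  exact hproj p hmem hidem hsa hpne hz
end
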